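/- Let q and q' be distinct primes with q ≡ 1 (mod 4) and q' ≡ 1 (mod 4). Then there exist primes p and p', both ≡ 3 (mod 4), such that (p/q) = -1, (p/q') = 1, (p'/q) = 1 and (p'/q') = -1. -/

import Mathlib

/-!
By Dirichlet's theorem every unit class modulo `4 q q'` contains a prime. By the Chinese remainder
theorem such a class can prescribe `3` modulo `4`, a nonsquare modulo `q` and `1` modulo `q'`,
which gives `p`; swapping `q` and `q'` gives `p'`.
-/

theorem ZMod.natCast_eq_chineseRemainder_symm_iff {m n : ℕ} (hmn : m.Coprime n) (k : ℕ)
    (a : ZMod m) (b : ZMod n) :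
    (k : ZMod (m * n)) = (ZMod.chineseRemainder hmn).symm (a, b) ↔
      (k : ZMod m) = a ∧ (k : ZMod n) = b := by
  rw [RingEquiv.eq_symm_apply, map_natCast, Prod.ext_iff, Prod.fst_natCast, Prod.snd_natCast]

theorem Nat.exists_prime_natCast_eq_of_coprime {m n : ℕ} [NeZero m] [NeZero n]
    (hmn : m.Coprime n) {a : ZMod m} {b : ZMod n} (ha : IsUnit a) (hb : IsUnit b) :
    ∃ p : ℕ, p.Prime ∧ (p : ZMod m) = a ∧ (p : ZMod n) = b := by
  have hc := (Prod.isUnit_iff (x := (a, b)).mpr ⟨ha, hb⟩).map (ZMod.chineseRemainder hmn).symm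
  obtain ⟨p, -, hp, hpc⟩ := Nat.forall_exists_prime_gt_and_eq_mod hc 0
  exact ⟨p, hp, (ZMod.natCast_eq_chineseRemainder_symm_iff hmn p a b).mp hpc⟩

theorem Nat.exists_prime_mod_four_eq_three_natCast_eq {q q' : ℕ}
    [Fact q.Prime] [Fact q'.Prime]
    (hne : q ≠ q') (hq : q ≠ 2) (hq' : q' ≠ 2) {a : ZMod q} {a' : ZMod q'} (ha : a ≠ 0)
    (ha' : a' ≠ 0) : ∃ p : ℕ, p.Prime ∧ p % 4 = 3 ∧ (p : ZMod q) = a ∧ (p : ZMod q') = a' := by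
  have hqp : q.Prime := Fact.out
  have hq'p : q'.Prime := Fact.out
  have h4q : Nat.Coprime 4 q :=
    Nat.Coprime.pow_left 2 ((Nat.coprime_primes Nat.prime_two hqp).mpr hq.symm)
  have h4q' : Nat.Coprime 4 q' :=
    Nat.Coprime.pow_left 2 ((Nat.coprime_primes Nat.prime_two hq'p).mpr hq'.symm)
  have h4qq' : Nat.Coprime (4 * q) q' :=
    Nat.Coprime.mul_left h4q' ((Nat.coprime_primes hqp hq'p).mpr hne)
  have h3 : IsUnit (3 : ZMod 4) := by
    simpa using (ZMod.isUnit_iff_coprime 3 4).mpr (by norm_num)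
  have hc := (Prod.isUnit_iff (x := (3, a)).mpr ⟨h3, isUnit_iff_ne_zero.mpr ha⟩).map
    (ZMod.chineseRemainder h4q).symm
  obtain ⟨p, hp, hpc, hpa'⟩ :=
    Nat.exists_prime_natCast_eq_of_coprime h4qq' hc (isUnit_iff_ne_zero.mpr ha')
  obtain ⟨hp3, hpa⟩ := (ZMod.natCast_eq_chineseRemainder_symm_iff h4q p 3 a).mp hpc
  refine ⟨p, hp, ?_, hpa, hpa'⟩
  exact (ZMod.natCast_eq_natCast_iff' p 3 4).mp (by simpa using hp3)

theorem Nat.exists_prime_mod_four_eq_three_legendreSym {q q' : ℕ}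
    [Fact q.Prime] [Fact q'.Prime]
    (hne : q ≠ q') (hq : q ≠ 2) (hq' : q' ≠ 2) :
    ∃ p : ℕ, p.Prime ∧ p % 4 = 3 ∧ legendreSym q (p : ℤ) = -1 ∧ legendreSym q' (p : ℤ) = 1 := by
  obtain ⟨b, hb⟩ := FiniteField.exists_nonsquare (F := ZMod q) (by rwa [ZMod.ringChar_zmod_n])
  have hb0 : b ≠ 0 := by
    rintro rfl
    exact hb IsSquare.zero
  obtain ⟨p, hp, hp4, hpb, hp1⟩ :=
    Nat.exists_prime_mod_four_eq_three_natCast_eq hne hq hq' hb0 (one_ne_zero (α := ZMod q'))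
  refine ⟨p, hp, hp4, (legendreSym.eq_neg_one_iff' q).mpr (hpb ▸ hb), ?_⟩
  exact (legendreSym.eq_one_iff' q' (hp1 ▸ one_ne_zero)).mpr (hp1 ▸ IsSquare.one)

/-- Kummer's third auxiliary lemma: for distinct primes `q ≡ q' ≡ 1 (mod 4)` there are primes
`p ≡ p' ≡ 3 (mod 4)` with `(p/q) = -1`, `(p/q') = 1`, `(p'/q) = 1` and `(p'/q') = -1`. -/
theorem kummer_lemma_three (q q' : ℕ) [Fact q.Prime] [Fact q'.Prime] (hne : q ≠ q')
    (hq : q % 4 = 1) (hq' : q' % 4 = 1) :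
    ∃ p p' : ℕ, p.Prime ∧ p'.Prime ∧ p % 4 = 3 ∧ p' % 4 = 3 ∧
      legendreSym q (p : ℤ) = -1 ∧ legendreSym q' (p : ℤ) = 1 ∧
      legendreSym q (p' : ℤ) = 1 ∧ legendreSym q' (p' : ℤ) = -1 := by
  have hq2 : q ≠ 2 := by omega
  have hq'2 : q' ≠ 2 := by omega
  obtain ⟨p, hp, hp4, hpq, hpq'⟩ := Nat.exists_prime_mod_four_eq_three_legendreSym hne hq2 hq'2
  obtain ⟨p', hp', hp'4, hp'q', hp'q⟩ :=
    Nat.exists_prime_mod_four_eq_three_legendreSym hne.symm hq'2 hq2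
  exact ⟨p, p', hp, hp', hp4, hp'4, hpq, hpq', hp'q, hp'q'⟩
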